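/- Under hypotheses (γ), (φ_hyp), and (F0), the functional φ(u) = ∑_{t=1}^T [ γ₁(t)Φ₁(Δu₁(t)) + γ₂(t)Φ₂(Δu₂(t)) + γ₃(t)Φ₃(u₁(t)) + γ₄(t)Φ₄(u₂(t)) − F(t,u₁(t),u₂(t)) ] satisfies φ(u) → +∞ as ‖u₁‖_∞ + ‖u₂‖_∞ → ∞; that is, for every M > 0 there exists R > 0 such that ‖u₁‖_∞ + ‖u₂‖_∞ ≥ R implies φ(u) ≥ M. In particular φ is bounded below on E. -/

import Mathlib

/-!
Dropping the nonnegative difference terms, and keeping of each potential sum only the term at a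
time where `|uᵢ(t)|` attains `sᵢ = ‖uᵢ‖_∞`, gives
`φ(u) ≥ c₁ s₁^q − H₁ s₁^{α₁} + c₂ s₂^p − H₂ s₂^{α₂} − L` with `Hᵢ = ∑ hᵢ` and `L = ∑ l`.
Since `α₁ < q` and `α₂ < p`, each `c s^e − H s^α` is bounded below on `[0, ∞)` and tends to `+∞`,
so the right-hand side is bounded below and large once `s₁ + s₂` is.
-/

noncomputable section

abbrev Rn (N : ℕ) := EuclideanSpace ℝ (Fin N)

/-- `u : ℤ → ℝ^N` is `T`-periodic. -/
def IsPeriodic (N : ℕ) (T : ℕ) (u : ℤ → Rn N) : Prop := ∀ t : ℤ, u (t + T) = u t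

/-- Forward difference. -/
def fdiff (N : ℕ) (u : ℤ → Rn N) (t : ℤ) : Rn N := u (t + 1) - u t

/-- `‖w‖_∞ = max_{t∈ℤ[1,T]} |w(t)|` (for `T ≥ 1`). -/
def supNorm (N T : ℕ) (hT : 1 ≤ T) (w : ℤ → Rn N) : ℝ :=
  (Finset.Icc (1 : ℤ) (T : ℤ)).sup'
    (Finset.nonempty_Icc.mpr (by exact_mod_cast hT)) (fun t => ‖w t‖)

/-- The action functional of Theorem 1.2. -/
def phiFun (N T : ℕ) (γ : Fin 4 → ℤ → ℝ) (Φv : Fin 4 → Rn N → ℝ)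
    (F : ℤ → Rn N → Rn N → ℝ) (u : (ℤ → Rn N) × (ℤ → Rn N)) : ℝ :=
  ∑ t ∈ Finset.Icc (1 : ℤ) (T : ℤ),
    (γ 0 t * Φv 0 (fdiff N u.1 t) + γ 1 t * Φv 1 (fdiff N u.2 t)
      + γ 2 t * Φv 2 (u.1 t) + γ 3 t * Φv 3 (u.2 t) - F t (u.1 t) (u.2 t))

open Filter Finset

lemma exists_mul_rpow_le_mul_rpow_add {c H α e : ℝ} (hc : 0 < c) (hH : 0 ≤ H) (hα : 0 ≤ α)
    (hαe : α < e) : ∃ K, ∀ s : ℝ, 0 ≤ s → H * s ^ α ≤ c * s ^ e + K := by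
  set S := (H / c) ^ (e - α)⁻¹
  have hS : 0 ≤ S := by positivity
  refine ⟨H * S ^ α, fun s hs => ?_⟩
  rcases le_or_gt s S with hsS | hSs
  · have : H * s ^ α ≤ H * S ^ α := by gcongr
    nlinarith [Real.rpow_nonneg hs e]
  · have hs₀ : 0 < s := hS.trans_lt hSs
    have hHc : H / c ≤ s ^ (e - α) := by
      calc H / c = S ^ (e - α) := (Real.rpow_inv_rpow (by positivity) (by linarith)).symm
        _ ≤ s ^ (e - α) := by gcongr
    have hH_le : H ≤ c * s ^ (e - α) := by rwa [div_le_iff₀' hc] at hHc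
    calc H * s ^ α ≤ c * s ^ (e - α) * s ^ α := by gcongr
      _ = c * s ^ e := by rw [mul_assoc, ← Real.rpow_add hs₀, sub_add_cancel]
      _ ≤ c * s ^ e + H * S ^ α := le_add_of_nonneg_right (by positivity)

section LowerOrderPerturbation

variable {c H α e : ℝ} (hc : 0 < c) (hH : 0 ≤ H) (hα : 0 ≤ α) (hαe : α < e)
include hc hH hα hαe

lemma exists_le_mul_rpow_sub_mul_rpow : ∃ B, ∀ s : ℝ, 0 ≤ s → B ≤ c * s ^ e - H * s ^ α := by
  obtain ⟨K, hK⟩ := exists_mul_rpow_le_mul_rpow_add hc hH hα hαe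
  exact ⟨-K, fun s hs => by linarith [hK s hs]⟩

lemma tendsto_mul_rpow_sub_mul_rpow :
    Tendsto (fun s : ℝ => c * s ^ e - H * s ^ α) atTop atTop := by
  obtain ⟨K, hK⟩ := exists_mul_rpow_le_mul_rpow_add (half_pos hc) hH hα hαe
  have hdom : Tendsto (fun s : ℝ => c / 2 * s ^ e + -K) atTop atTop :=
    tendsto_atTop_add_const_right _ _
      ((tendsto_rpow_atTop (by linarith)).const_mul_atTop (half_pos hc))
  refine tendsto_atTop_mono' _ ?_ hdom
  filter_upwards [eventually_ge_atTop 0] with s hs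
  linarith [hK s hs]

end LowerOrderPerturbation

lemma exists_pos_forall_le_add_of_tendsto {g₁ g₂ : ℝ → ℝ} {B₁ B₂ : ℝ}
    (h₁ : Tendsto g₁ atTop atTop) (h₂ : Tendsto g₂ atTop atTop)
    (hB₁ : ∀ s, 0 ≤ s → B₁ ≤ g₁ s) (hB₂ : ∀ s, 0 ≤ s → B₂ ≤ g₂ s) (M : ℝ) :
    ∃ R, 0 < R ∧ ∀ s₁ s₂, 0 ≤ s₁ → 0 ≤ s₂ → R ≤ s₁ + s₂ → M ≤ g₁ s₁ + g₂ s₂ := by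
  obtain ⟨R₁, hR₁⟩ := eventually_atTop.1 (tendsto_atTop.1 h₁ (M - B₂))
  obtain ⟨R₂, hR₂⟩ := eventually_atTop.1 (tendsto_atTop.1 h₂ (M - B₁))
  refine ⟨max R₁ 1 + max R₂ 1, by positivity, fun s₁ s₂ hs₁ hs₂ hR => ?_⟩
  by_cases hs : max R₁ 1 ≤ s₁
  · linarith [hR₁ s₁ (le_of_max_le_left hs), hB₂ s₂ hs₂]
  · have : max R₂ 1 ≤ s₂ := by linarith
    linarith [hR₂ s₂ (le_of_max_le_left this), hB₁ s₁ hs₁]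

section SupNorm

variable {ι E : Type*} [NormedAddCommGroup E] {s : Finset ι} (hs : s.Nonempty)

lemma le_sup'_norm (u : ι → E) {t : ι} (ht : t ∈ s) : ‖u t‖ ≤ s.sup' hs fun t => ‖u t‖ :=
  le_sup' (fun t => ‖u t‖) ht

lemma sup'_norm_nonneg (u : ι → E) : 0 ≤ s.sup' hs fun t => ‖u t‖ :=
  (norm_nonneg _).trans (le_sup'_norm hs u hs.choose_spec)

lemma inf'_mul_mul_sup'_norm_rpow_le_sum {γ : ι → ℝ} {Φ : E → ℝ} {a e : ℝ}
    (hγ : ∀ t ∈ s, 0 ≤ γ t) (ha : 0 ≤ a) (hΦ : ∀ x, a * ‖x‖ ^ e ≤ Φ x) (u : ι → E) :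
    s.inf' hs γ * a * (s.sup' hs fun t => ‖u t‖) ^ e ≤ ∑ t ∈ s, γ t * Φ (u t) := by
  obtain ⟨t₀, ht₀, hmax⟩ := exists_mem_eq_sup' hs fun t => ‖u t‖
  have hterm : ∀ t ∈ s, 0 ≤ γ t * Φ (u t) := fun t ht =>
    mul_nonneg (hγ t ht) ((mul_nonneg ha (by positivity)).trans (hΦ _))
  calc s.inf' hs γ * a * (s.sup' hs fun t => ‖u t‖) ^ e
      = s.inf' hs γ * (a * ‖u t₀‖ ^ e) := by rw [hmax, mul_assoc]
    _ ≤ γ t₀ * Φ (u t₀) :=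
        mul_le_mul (inf'_le γ ht₀) (hΦ _) (by positivity) (hγ t₀ ht₀)
    _ ≤ ∑ t ∈ s, γ t * Φ (u t) := single_le_sum hterm ht₀

lemma sum_le_of_le_mul_norm_rpow_add {F : ι → E → E → ℝ} {h₁ h₂ l : ι → ℝ} {α₁ α₂ : ℝ}
    (hα₁ : 0 ≤ α₁) (hα₂ : 0 ≤ α₂) (hh₁ : ∀ t ∈ s, 0 ≤ h₁ t) (hh₂ : ∀ t ∈ s, 0 ≤ h₂ t)
    (hF : ∀ t ∈ s, ∀ x₁ x₂, F t x₁ x₂ ≤ h₁ t * ‖x₁‖ ^ α₁ + h₂ t * ‖x₂‖ ^ α₂ + l t)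
    (u₁ u₂ : ι → E) :
    ∑ t ∈ s, F t (u₁ t) (u₂ t) ≤ (∑ t ∈ s, h₁ t) * (s.sup' hs fun t => ‖u₁ t‖) ^ α₁
      + (∑ t ∈ s, h₂ t) * (s.sup' hs fun t => ‖u₂ t‖) ^ α₂ + ∑ t ∈ s, l t := by
  rw [sum_mul, sum_mul, ← sum_add_distrib, ← sum_add_distrib]
  refine sum_le_sum fun t ht => (hF t ht _ _).trans ?_
  gcongr
  · exact hh₁ t ht
  · exact le_sup'_norm hs u₁ ht
  · exact hh₂ t ht
  · exact le_sup'_norm hs u₂ ht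

end SupNorm

lemma sum_potential_sub_le_phiFun {N T : ℕ} {γ : Fin 4 → ℤ → ℝ} {Φv : Fin 4 → Rn N → ℝ}
    (F : ℤ → Rn N → Rn N → ℝ) (hγ : ∀ i, ∀ t ∈ Icc (1 : ℤ) T, 0 ≤ γ i t)
    (hΦ : ∀ i x, 0 ≤ Φv i x) (u : (ℤ → Rn N) × (ℤ → Rn N)) :
    ∑ t ∈ Icc (1 : ℤ) T, γ 2 t * Φv 2 (u.1 t) + ∑ t ∈ Icc (1 : ℤ) T, γ 3 t * Φv 3 (u.2 t)
      - ∑ t ∈ Icc (1 : ℤ) T, F t (u.1 t) (u.2 t) ≤ phiFun N T γ Φv F u := by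
  rw [phiFun, ← sum_add_distrib, ← sum_sub_distrib]
  refine sum_le_sum fun t ht => ?_
  linarith [mul_nonneg (hγ 0 t ht) (hΦ 0 (fdiff N u.1 t)),
    mul_nonneg (hγ 1 t ht) (hΦ 1 (fdiff N u.2 t))]

theorem phi_coercive_and_bounded_below_general (T N : ℕ) (hT : 1 < T)
    (γ : Fin 4 → ℤ → ℝ) (Φv : Fin 4 → Rn N → ℝ)
    (F : ℤ → Rn N → Rn N → ℝ)
    (p q : ℝ) (a b : Fin 4 → ℝ)
    (ha : ∀ i, 0 < a i)
    -- hypothesis (γ)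
    (hγpos : ∀ i, ∀ t ∈ Finset.Icc (1 : ℤ) (T : ℤ), 0 < γ i t)
    -- hypothesis (φ_hyp)
    (hΦnonneg : ∀ i, ∀ x : Rn N, 0 ≤ Φv i x)
    (hΦq : ∀ i ∈ ({0, 2} : Set (Fin 4)), ∀ x : Rn N,
      a i * ‖x‖ ^ q ≤ Φv i x ∧ Φv i x ≤ b i * ‖x‖ ^ q)
    (hΦp : ∀ i ∈ ({1, 3} : Set (Fin 4)), ∀ x : Rn N,
      a i * ‖x‖ ^ p ≤ Φv i x ∧ Φv i x ≤ b i * ‖x‖ ^ p)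
    -- hypothesis (F0)
    (α₁ α₂ : ℝ) (hα₁ : 0 ≤ α₁ ∧ α₁ < q) (hα₂ : 0 ≤ α₂ ∧ α₂ < p)
    (h₁ h₂ lfun : ℤ → ℝ)
    (hh₁ : ∀ t ∈ Finset.Icc (1 : ℤ) (T : ℤ), 0 ≤ h₁ t)
    (hh₂ : ∀ t ∈ Finset.Icc (1 : ℤ) (T : ℤ), 0 ≤ h₂ t)
    (hF0 : ∀ t ∈ Finset.Icc (1 : ℤ) (T : ℤ), ∀ x₁ x₂ : Rn N,
      F t x₁ x₂ ≤ h₁ t * ‖x₁‖ ^ α₁ + h₂ t * ‖x₂‖ ^ α₂ + lfun t) :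
    (∀ M : ℝ, 0 < M → ∃ R : ℝ, 0 < R ∧
      ∀ u : (ℤ → Rn N) × (ℤ → Rn N), IsPeriodic N T u.1 → IsPeriodic N T u.2 →
        R ≤ supNorm N T hT.le u.1 + supNorm N T hT.le u.2 →
          M ≤ phiFun N T γ Φv F u)
    ∧ ∃ B : ℝ, ∀ u : (ℤ → Rn N) × (ℤ → Rn N), IsPeriodic N T u.1 → IsPeriodic N T u.2 →
        B ≤ phiFun N T γ Φv F u := by
  have hI : (Icc (1 : ℤ) T).Nonempty := nonempty_Icc.mpr (by exact_mod_cast hT.le)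
  have hγ : ∀ i, ∀ t ∈ Icc (1 : ℤ) T, 0 ≤ γ i t := fun i t ht => (hγpos i t ht).le
  have hc₁ : 0 < (Icc (1 : ℤ) T).inf' hI (γ 2) * a 2 :=
    mul_pos ((lt_inf'_iff hI).2 (hγpos 2)) (ha 2)
  have hc₂ : 0 < (Icc (1 : ℤ) T).inf' hI (γ 3) * a 3 :=
    mul_pos ((lt_inf'_iff hI).2 (hγpos 3)) (ha 3)
  set L := ∑ t ∈ Icc (1 : ℤ) T, lfun t
  set g₁ : ℝ → ℝ := fun s => (Icc (1 : ℤ) T).inf' hI (γ 2) * a 2 * s ^ q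
    - (∑ t ∈ Icc (1 : ℤ) T, h₁ t) * s ^ α₁
  set g₂ : ℝ → ℝ := fun s => (Icc (1 : ℤ) T).inf' hI (γ 3) * a 3 * s ^ p
    - (∑ t ∈ Icc (1 : ℤ) T, h₂ t) * s ^ α₂
  have key : ∀ u, g₁ (supNorm N T hT.le u.1) + g₂ (supNorm N T hT.le u.2) - L
      ≤ phiFun N T γ Φv F u := fun u => by
    have hpot₁ := inf'_mul_mul_sup'_norm_rpow_le_sum hI (hγ 2) (ha 2).le
      (fun x => (hΦq 2 (by simp) x).1) u.1
    have hpot₂ := inf'_mul_mul_sup'_norm_rpow_le_sum hI (hγ 3) (ha 3).le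
      (fun x => (hΦp 3 (by simp) x).1) u.2
    have hF := sum_le_of_le_mul_norm_rpow_add hI hα₁.1 hα₂.1 hh₁ hh₂ hF0 u.1 u.2
    have := sum_potential_sub_le_phiFun F hγ hΦnonneg u
    simp only [g₁, g₂, supNorm]
    linarith
  obtain ⟨B₁, hB₁⟩ := exists_le_mul_rpow_sub_mul_rpow hc₁ (sum_nonneg hh₁) hα₁.1 hα₁.2
  obtain ⟨B₂, hB₂⟩ := exists_le_mul_rpow_sub_mul_rpow hc₂ (sum_nonneg hh₂) hα₂.1 hα₂.2
  have hnn : ∀ w, 0 ≤ supNorm N T hT.le w := sup'_norm_nonneg hI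
  refine ⟨fun M _ => ?_, B₁ + B₂ - L, fun u _ _ => ?_⟩
  · obtain ⟨R, hR, hRM⟩ := exists_pos_forall_le_add_of_tendsto
      (tendsto_mul_rpow_sub_mul_rpow hc₁ (sum_nonneg hh₁) hα₁.1 hα₁.2)
      (tendsto_mul_rpow_sub_mul_rpow hc₂ (sum_nonneg hh₂) hα₂.1 hα₂.2) hB₁ hB₂ (M + L)
    exact ⟨R, hR, fun u _ _ hu => by linarith [key u, hRM _ _ (hnn _) (hnn _) hu]⟩
  · linarith [key u, hB₁ _ (hnn u.1), hB₂ _ (hnn u.2)]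

theorem phi_coercive_and_bounded_below (T N : ℕ) (hT : 1 < T)
    (γ : Fin 4 → ℤ → ℝ) (φv : Fin 4 → Rn N → Rn N) (Φv : Fin 4 → Rn N → ℝ)
    (F : ℤ → Rn N → Rn N → ℝ)
    (p q : ℝ) (a b : Fin 4 → ℝ)
    (hp : 1 < p) (hq : 1 < q) (ha : ∀ i, 0 < a i) (hb : ∀ i, 0 < b i)
    -- hypothesis (γ)
    (hγper : ∀ i, ∀ t : ℤ, γ i (t + T) = γ i t)
    (hγpos : ∀ i, ∀ t ∈ Finset.Icc (1 : ℤ) (T : ℤ), 0 < γ i t)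
    -- hypothesis (φ_hyp)
    (hφgrad : ∀ i, ∀ x : Rn N, φv i x = gradient (Φv i) x)
    (hΦnonneg : ∀ i, ∀ x : Rn N, 0 ≤ Φv i x)
    (hΦq : ∀ i ∈ ({0, 2} : Set (Fin 4)), ∀ x : Rn N,
      a i * ‖x‖ ^ q ≤ Φv i x ∧ Φv i x ≤ b i * ‖x‖ ^ q)
    (hΦp : ∀ i ∈ ({1, 3} : Set (Fin 4)), ∀ x : Rn N,
      a i * ‖x‖ ^ p ≤ Φv i x ∧ Φv i x ≤ b i * ‖x‖ ^ p)
    -- `F`: `T`-periodic in `t` and continuous in `(x₁,x₂)`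
    (hFper : ∀ (t : ℤ) (x₁ x₂ : Rn N), F (t + T) x₁ x₂ = F t x₁ x₂)
    (hFcont : ∀ t : ℤ, Continuous (fun pt : Rn N × Rn N => F t pt.1 pt.2))
    -- hypothesis (F0)
    (α₁ α₂ : ℝ) (hα₁ : 0 ≤ α₁ ∧ α₁ < q) (hα₂ : 0 ≤ α₂ ∧ α₂ < p)
    (h₁ h₂ lfun : ℤ → ℝ)
    (hh₁ : ∀ t ∈ Finset.Icc (1 : ℤ) (T : ℤ), 0 ≤ h₁ t)
    (hh₂ : ∀ t ∈ Finset.Icc (1 : ℤ) (T : ℤ), 0 ≤ h₂ t)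
    (hlf : ∀ t ∈ Finset.Icc (1 : ℤ) (T : ℤ), 0 ≤ lfun t)
    (hF0 : ∀ t ∈ Finset.Icc (1 : ℤ) (T : ℤ), ∀ x₁ x₂ : Rn N,
      F t x₁ x₂ ≤ h₁ t * ‖x₁‖ ^ α₁ + h₂ t * ‖x₂‖ ^ α₂ + lfun t) :
    (∀ M : ℝ, 0 < M → ∃ R : ℝ, 0 < R ∧
      ∀ u : (ℤ → Rn N) × (ℤ → Rn N), IsPeriodic N T u.1 → IsPeriodic N T u.2 →
        R ≤ supNorm N T hT.le u.1 + supNorm N T hT.le u.2 →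
          M ≤ phiFun N T γ Φv F u)
    ∧ ∃ B : ℝ, ∀ u : (ℤ → Rn N) × (ℤ → Rn N), IsPeriodic N T u.1 → IsPeriodic N T u.2 →
        B ≤ phiFun N T γ Φv F u :=
  phi_coercive_and_bounded_below_general T N hT γ Φv F p q a b ha hγpos hΦnonneg hΦq hΦp α₁ α₂ hα₁
    hα₂ h₁ h₂ lfun hh₁ hh₂ hF0
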